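/- For a ≥ 2, ∑_{i=1}^{a−1} C(a,i)/√i = 2^a·√(2/(πa))·√(2π)·(1/√2)·(1 + o(1)), i.e. ∑_{i=1}^{a−1} C(a,i)/√i ∼ 2^a·√(2/a) as a → ∞. -/

import Mathlib

open Filter Asymptotics

/-!
Weight the binomial coefficients by `1 / √i` and cut `{0, …, n}` at the central window
`|2i - n| ≤ s n`. Since `∑ C(n,i) (2i - n)² = n 2ⁿ`, Chebyshev's inequality bounds the mass outside
the window by `2ⁿ / (n s²)`, which is `o(2ⁿ / √n)` as soon as `s² √n → ∞`; inside the window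
`1 / √i` lies between `√(2/n) / √(1 ± s)`. Taking `s = n^(-1/5)` squeezes the ratio of the sum to
`2ⁿ √(2/n)` to `1`.
-/

open Finset Topology

theorem sum_range_choose_cast {R : Type*} [Semiring R] (n : ℕ) :
    ∑ i ∈ range (n + 1), (n.choose i : R) = 2 ^ n := by
  rw [← Nat.cast_sum, Nat.sum_range_choose, Nat.cast_pow, Nat.cast_ofNat]

theorem sum_range_choose_mul_two_mul_sub_sq (n : ℕ) :
    ∑ i ∈ range (n + 1), (n.choose i : ℝ) * (2 * i - n) ^ 2 = (n : ℝ) * 2 ^ n := by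
  induction n with
  | zero => simp
  | succ n ih =>
    -- Pascal's rule: each term of level `n` feeds `(2i - n ∓ 1)²`, whose sum is `2 (2i - n)² + 2`.
    have hpascal := sum_choose_succ_mul (fun i _ => (2 * i - (n + 1) : ℝ) ^ 2) n
    push_cast
    rw [hpascal, ← sum_add_distrib]
    calc _ = ∑ i ∈ range (n + 1), (2 * ((n.choose i : ℝ) * (2 * i - n) ^ 2) + 2 * n.choose i) :=
          sum_congr rfl fun i _ => by push_cast; ring
      _ = _ := by rw [sum_add_distrib, ← mul_sum, ← mul_sum, ih, sum_range_choose_cast]; ring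

theorem sum_choose_le_of_le_abs_two_mul_sub {n : ℕ} {t : ℝ} (ht : 0 < t) {S : Finset ℕ}
    (hS : S ⊆ range (n + 1)) (h : ∀ i ∈ S, t ≤ |2 * (i : ℝ) - n|) :
    ∑ i ∈ S, (n.choose i : ℝ) ≤ n * 2 ^ n / t ^ 2 := by
  rw [le_div_iff₀ (by positivity), sum_mul, ← sum_range_choose_mul_two_mul_sub_sq]
  calc ∑ i ∈ S, (n.choose i : ℝ) * t ^ 2 ≤ ∑ i ∈ S, (n.choose i : ℝ) * (2 * i - n) ^ 2 :=
        sum_le_sum fun i hi => by rw [← sq_abs (2 * (i : ℝ) - n)]; gcongr; exact h i hi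
    _ ≤ _ := sum_le_sum_of_subset_of_nonneg hS fun _ _ _ => by positivity

noncomputable def centralWindow (n : ℕ) (s : ℝ) : Finset ℕ :=
  {i ∈ range (n + 1) | |2 * (i : ℝ) - n| ≤ s * n}

section

variable {n i : ℕ} {s : ℝ}

namespace centralWindow

theorem subset_range : centralWindow n s ⊆ range (n + 1) := filter_subset _ _

theorem two_mul_mem_Icc (hi : i ∈ centralWindow n s) :
    2 * (i : ℝ) ∈ Set.Icc (n * (1 - s)) (n * (1 + s)) := by
  have := abs_le.1 (mem_filter.1 hi).2
  constructor <;> linarith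

theorem subset_Icc (hs : s < 1) (hn : 0 < n) : centralWindow n s ⊆ Icc 1 (n - 1) := by
  intro i hi
  obtain ⟨hlo, hhi⟩ := two_mul_mem_Icc hi
  have hn' : (0 : ℝ) < n := by exact_mod_cast hn
  have hi_pos : 0 < i := by exact_mod_cast (show (0 : ℝ) < i by nlinarith)
  have hi_lt : i < n := by exact_mod_cast (show (i : ℝ) < n by nlinarith)
  rw [mem_Icc]; omega

theorem inv_sqrt_mem_Icc (hs : s < 1) (hn : 0 < n) (hi : i ∈ centralWindow n s) :
    (√i)⁻¹ ∈ Set.Icc (√(2 / n) / √(1 + s)) (√(2 / n) / √(1 - s)) := by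
  obtain ⟨hlo, hhi⟩ := two_mul_mem_Icc hi
  have hn' : (0 : ℝ) < n := by exact_mod_cast hn
  have hi' : (0 : ℝ) < i := by exact_mod_cast (mem_Icc.1 (subset_Icc hs hn hi)).1
  have hsqrt : √(2 / n) * √i = √(2 * i / n) := by rw [← Real.sqrt_mul (by positivity)]; ring_nf
  have hs0 : 0 ≤ s := by nlinarith
  rw [← one_div]
  constructor
  · rw [div_le_div_iff₀ (by positivity) (by positivity), one_mul, hsqrt]
    exact Real.sqrt_le_sqrt (by rw [div_le_iff₀ hn']; linarith)
  · rw [div_le_div_iff₀ (by positivity) (by rw [Real.sqrt_pos]; linarith), one_mul, hsqrt]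
    exact Real.sqrt_le_sqrt (by rw [le_div_iff₀ hn']; linarith)

theorem sum_choose_compl_le (hs : 0 < s) (hn : 0 < n) :
    ∑ i ∈ range (n + 1) \ centralWindow n s, (n.choose i : ℝ) ≤ 2 ^ n / (n * s ^ 2) := by
  have hn' : (0 : ℝ) < n := by exact_mod_cast hn
  calc _ ≤ n * 2 ^ n / (s * n) ^ 2 := by
        refine sum_choose_le_of_le_abs_two_mul_sub (by positivity) sdiff_subset fun i hi => ?_
        obtain ⟨hi_range, hi_not⟩ := mem_sdiff.1 hi
        rw [centralWindow, mem_filter, not_and, not_le] at hi_not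
        exact (hi_not hi_range).le
    _ = _ := by field_simp

theorem le_sum_choose (hs : 0 < s) (hn : 0 < n) :
    2 ^ n * (1 - 1 / (n * s ^ 2)) ≤ ∑ i ∈ centralWindow n s, (n.choose i : ℝ) := by
  have htotal := sum_range_choose_cast (R := ℝ) n
  rw [← sum_sdiff subset_range] at htotal
  have := sum_choose_compl_le hs hn
  rw [mul_one_sub, mul_one_div]
  linarith

theorem sum_choose_div_sqrt_le (hs : s < 1) (hn : 0 < n) :
    ∑ i ∈ centralWindow n s, (n.choose i : ℝ) / √i ≤ 2 ^ n * (√(2 / n) / √(1 - s)) :=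
  calc _ ≤ ∑ i ∈ centralWindow n s, (n.choose i : ℝ) * (√(2 / n) / √(1 - s)) := by
        gcongr with i hi
        rw [div_eq_mul_inv]
        gcongr
        exact (inv_sqrt_mem_Icc hs hn hi).2
    _ ≤ ∑ i ∈ range (n + 1), (n.choose i : ℝ) * (√(2 / n) / √(1 - s)) :=
        sum_le_sum_of_subset_of_nonneg subset_range fun _ _ _ => by positivity
    _ = _ := by rw [← sum_mul, sum_range_choose_cast]

end centralWindow

theorem le_sum_choose_div_sqrt (hs0 : 0 < s) (hs1 : s < 1) (hn : 0 < n) :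
    2 ^ n * √(2 / n) * ((1 - 1 / (n * s ^ 2)) / √(1 + s)) ≤
      ∑ i ∈ Icc 1 (n - 1), (n.choose i : ℝ) / √i :=
  calc _ = 2 ^ n * (1 - 1 / (n * s ^ 2)) * (√(2 / n) / √(1 + s)) := by ring
    _ ≤ (∑ i ∈ centralWindow n s, (n.choose i : ℝ)) * (√(2 / n) / √(1 + s)) := by
      gcongr; exact centralWindow.le_sum_choose hs0 hn
    _ ≤ ∑ i ∈ centralWindow n s, (n.choose i : ℝ) / √i := by
      rw [sum_mul]
      refine sum_le_sum fun i hi => ?_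
      rw [div_eq_mul_inv]
      exact mul_le_mul_of_nonneg_left (centralWindow.inv_sqrt_mem_Icc hs1 hn hi).1 (by positivity)
    _ ≤ _ := sum_le_sum_of_subset_of_nonneg (centralWindow.subset_Icc hs1 hn)
      fun _ _ _ => by positivity

theorem sum_choose_div_sqrt_le (hs0 : 0 < s) (hs1 : s < 1) (hn : 0 < n) :
    ∑ i ∈ Icc 1 (n - 1), (n.choose i : ℝ) / √i ≤
      2 ^ n * √(2 / n) * (1 / √(1 - s) + 1 / (s ^ 2 * √(2 * n))) := by
  have hn' : (0 : ℝ) < n := by exact_mod_cast hn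
  have hIcc : Icc 1 (n - 1) ⊆ range (n + 1) := fun i hi => by
    rw [mem_Icc] at hi; rw [mem_range]; omega
  have htail : ∑ i ∈ Icc 1 (n - 1) \ centralWindow n s, (n.choose i : ℝ) / √i ≤
      2 ^ n / (n * s ^ 2) :=
    calc _ ≤ ∑ i ∈ Icc 1 (n - 1) \ centralWindow n s, (n.choose i : ℝ) := by
          gcongr with i hi
          refine div_le_self (by positivity) (Real.one_le_sqrt.2 ?_)
          exact_mod_cast (mem_Icc.1 (mem_sdiff.1 hi).1).1
      _ ≤ ∑ i ∈ range (n + 1) \ centralWindow n s, (n.choose i : ℝ) :=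
          sum_le_sum_of_subset_of_nonneg (sdiff_subset_sdiff hIcc le_rfl)
            fun _ _ _ => by positivity
      _ ≤ _ := centralWindow.sum_choose_compl_le hs0 hn
  have hsqrt : √(2 * n) = n * √(2 / n) := by
    rw [show (2 : ℝ) * n = n ^ 2 * (2 / n) by field_simp, Real.sqrt_mul (sq_nonneg _),
      Real.sqrt_sq hn'.le]
  rw [← sum_sdiff (centralWindow.subset_Icc hs1 hn)]
  calc _ ≤ 2 ^ n / (n * s ^ 2) + 2 ^ n * (√(2 / n) / √(1 - s)) :=
        add_le_add htail (centralWindow.sum_choose_div_sqrt_le hs1 hn)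
    _ = _ := by rw [hsqrt]; field_simp; ring

end

theorem tendsto_rpow_neg_one_fifth_sq_mul_sqrt :
    Tendsto (fun n : ℕ => ((n : ℝ) ^ (-(1 / 5 : ℝ))) ^ 2 * √(2 * n)) atTop atTop := by
  have : Tendsto (fun n : ℕ => √2 * (n : ℝ) ^ (1 / 10 : ℝ)) atTop atTop :=
    ((tendsto_rpow_atTop (by norm_num)).comp tendsto_natCast_atTop_atTop).const_mul_atTop
      (by positivity)
  refine this.congr fun n => ?_
  rw [Real.sqrt_mul zero_le_two, Real.sqrt_eq_rpow (n : ℝ),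
    ← Real.rpow_mul_natCast (by positivity), mul_left_comm,
    ← Real.rpow_add' (by positivity) (by norm_num)]
  norm_num

theorem tendsto_sum_choose_div_sqrt_div :
    Tendsto (fun n : ℕ => (∑ i ∈ Icc 1 (n - 1), (n.choose i : ℝ) / √i) / (2 ^ n * √(2 / n)))
      atTop (𝓝 1) := by
  set s : ℕ → ℝ := fun n => (n : ℝ) ^ (-(1 / 5 : ℝ))
  have hs : Tendsto s atTop (𝓝 0) :=
    (tendsto_rpow_neg_atTop (by norm_num)).comp tendsto_natCast_atTop_atTop
  have hs_sqrt : Tendsto (fun n : ℕ => s n ^ 2 * √(2 * n)) atTop atTop :=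
    tendsto_rpow_neg_one_fifth_sq_mul_sqrt
  have hs_mul : Tendsto (fun n : ℕ => n * s n ^ 2) atTop atTop := by
    refine tendsto_atTop_mono' _ ?_ hs_sqrt
    filter_upwards [eventually_ge_atTop 2] with n hn
    rw [mul_comm]
    gcongr
    rw [Real.sqrt_le_left (by positivity), sq]
    gcongr
    exact_mod_cast hn
  have hlower : Tendsto (fun n => (1 - 1 / (n * s n ^ 2)) / √(1 + s n)) atTop (𝓝 1) := by
    have h := ((tendsto_const_nhds (x := (1 : ℝ))).sub hs_mul.inv_tendsto_atTop).div
      ((tendsto_const_nhds (x := (1 : ℝ))).add hs).sqrt (by norm_num)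
    rw [sub_zero, add_zero, Real.sqrt_one, div_one] at h
    simpa only [Pi.div_def, Pi.inv_apply, one_div] using h
  have hupper : Tendsto (fun n => 1 / √(1 - s n) + 1 / (s n ^ 2 * √(2 * n))) atTop (𝓝 1) := by
    simpa using ((tendsto_const_nhds (x := (1 : ℝ))).div
      ((tendsto_const_nhds (x := (1 : ℝ))).sub hs).sqrt (by norm_num)).add
      hs_sqrt.inv_tendsto_atTop
  have hs_pos : ∀ᶠ n : ℕ in atTop, 0 < s n :=
    (eventually_gt_atTop 0).mono fun n hn => Real.rpow_pos_of_pos (by exact_mod_cast hn) _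
  have hs_lt : ∀ᶠ n : ℕ in atTop, s n < 1 := hs.eventually (gt_mem_nhds one_pos)
  refine tendsto_of_tendsto_of_tendsto_of_le_of_le' hlower hupper ?_ ?_ <;>
    filter_upwards [eventually_gt_atTop 0, hs_pos, hs_lt] with n hn hs0 hs1
  · rw [le_div_iff₀ (by positivity), mul_comm]
    exact le_sum_choose_div_sqrt hs0 hs1 hn
  · rw [div_le_iff₀ (by positivity), mul_comm]
    exact sum_choose_div_sqrt_le hs0 hs1 hn

theorem stmt_15 :
    (fun a : ℕ => ∑ i ∈ Finset.Icc 1 (a - 1), (a.choose i : ℝ) / Real.sqrt i)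
      ~[atTop] fun a : ℕ => (2 : ℝ) ^ a * Real.sqrt (2 / a) :=
  isEquivalent_of_tendsto_one tendsto_sum_choose_div_sqrt_div
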